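/- arXiv:math/0609430 — 2 statements merged into one kernel-verified Lean document; each statement's English description precedes it below -/
import Mathlib

section
/- Let S be a positive densely defined symmetric operator on a Hilbert space H, and let T be the nonnegative self-adjoint square root of (S+I)₀ − I, where (S+I)₀ is the Friedrichs extension of S+I. Then for all u, v in the domain of S, (Tu, Tv) = (u, Sv). -/
open scoped InnerProductSpace

/-- For the square root `T` of `(S+I)₀ - I`, one has `(Tu, Tv) = (u, Sv)` for `u, v ∈ D(S)`. -/
theorem stmt_1
    {H : Type*} [NormedAddCommGroup H] [InnerProductSpace ℂ H] [CompleteSpace H]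
    (D DF DT : Submodule ℂ H)
    (S : D →ₗ[ℂ] H) (F : DF →ₗ[ℂ] H) (T : DT →ₗ[ℂ] H)
    -- S is densely defined, symmetric and positive
    (hdense : Dense (D : Set H))
    (hsym : ∀ u v : D, ⟪S u, (v : H)⟫_ℂ = ⟪(u : H), S v⟫_ℂ)
    (hpos : ∀ u : D, u ≠ 0 → 0 < (⟪S u, (u : H)⟫_ℂ).re)
    -- F is the Friedrichs extension (S+I)₀ of S + I
    (hDF : D ≤ DF)
    (hFext : ∀ u : D, F ⟨u, hDF u.2⟩ = S u + u)
    -- T is the nonnegative self-adjoint square root of (S+I)₀ - I, with D((S+I)₀) ⊆ D(T)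
    (hDT : DF ≤ DT)
    (hTsym : ∀ u v : DT, ⟪T u, (v : H)⟫_ℂ = ⟪(u : H), T v⟫_ℂ)
    (hTpos : ∀ u : DT, 0 ≤ (⟪T u, (u : H)⟫_ℂ).re)
    (hTmem : ∀ x : DF, T ⟨(x : H), hDT x.2⟩ ∈ DT)
    (hTsq : ∀ x : DF, T ⟨T ⟨(x : H), hDT x.2⟩, hTmem x⟩ = F x - x) :
    ∀ u v : D,
      ⟪T ⟨(u : H), hDT (hDF u.2)⟩, T ⟨(v : H), hDT (hDF v.2)⟩⟫_ℂ = ⟪(u : H), S v⟫_ℂ := by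
  intro u v
  have h1 := hTsym ⟨(u : H), hDT (hDF u.2)⟩ ⟨T ⟨(v : H), hDT (hDF v.2)⟩, hTmem ⟨(v : H), hDF v.2⟩⟩
  simp only [hTsq ⟨(v : H), hDF v.2⟩, hFext v] at h1
  rw [h1]
  simp
end

section
/- Let S be a densely defined positive symmetric operator on a Hilbert space H, and let L be a unitary operator on H preserving the domain of S and satisfying L⁻¹ S L = S on D(S). Then L commutes with the Friedrichs extension (S+I)₀ of S+I, i.e., L⁻¹ (S+I)₀ L = (S+I)₀. -/
open scoped InnerProductSpace

/-- If a unitary `L` commutes with the positive densely defined symmetric operator `S`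
(and preserves its domain), then `L` commutes with the Friedrichs extension `(S+I)₀`. -/
theorem stmt_3
    {H : Type*} [NormedAddCommGroup H] [InnerProductSpace ℂ H] [CompleteSpace H]
    (D DF : Submodule ℂ H)
    (S : D →ₗ[ℂ] H) (F : DF →ₗ[ℂ] H)
    -- S is densely defined, symmetric and positive
    (hdense : Dense (D : Set H))
    (hsym : ∀ u v : D, ⟪S u, (v : H)⟫_ℂ = ⟪(u : H), S v⟫_ℂ)
    (hpos : ∀ u : D, u ≠ 0 → 0 < (⟪S u, (u : H)⟫_ℂ).re)
    -- F = (S+I)₀ is the Friedrichs extension: the inverse of the bounded operator B,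
    -- where B is the (bounded, everywhere defined) closure of (S+I)⁻¹
    (B : H →L[ℂ] H)
    (hBinj : Function.Injective B)
    (hBrange : Set.range B = (DF : Set H))
    (hFB : ∀ y : H, ∃ h : B y ∈ DF, F ⟨B y, h⟩ = y)
    (hBF : ∀ x : DF, B (F x) = x)
    (hDF : D ≤ DF)
    (hFext : ∀ u : D, F ⟨u, hDF u.2⟩ = S u + u)
    (hrange_dense : Dense (Set.range fun u : D => S u + (u : H)))
    -- L is unitary, preserves D(S) and commutes with S on D(S)
    (L : H ≃ₗᵢ[ℂ] H)
    (hLD : ∀ x : H, x ∈ D ↔ L x ∈ D)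
    (hLS : ∀ (x : H) (hx : x ∈ D) (hLx : L x ∈ D), S ⟨L x, hLx⟩ = L (S ⟨x, hx⟩)) :
    (∀ x : H, x ∈ DF ↔ L x ∈ DF) ∧
      ∀ (x : H) (hx : x ∈ DF) (hLx : L x ∈ DF), F ⟨L x, hLx⟩ = L (F ⟨x, hx⟩) := by
  -- Key step: B commutes with L.
  have hcomm : ∀ y : H, B (L y) = L (B y) := by
    have heq : (fun y : H => B (L y)) = fun y : H => L (B y) := by
      apply Continuous.ext_on hrange_dense
      · exact B.continuous.comp L.continuous
      · exact L.continuous.comp B.continuous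
      · rintro y ⟨u, rfl⟩
        simp only
        have hu : (u : H) ∈ D := u.2
        have hLu : L (u : H) ∈ D := (hLD _).mp hu
        have h1 : S u + (u : H) = F ⟨u, hDF u.2⟩ := by
          rw [hFext u]
        have h2 : B (S u + (u : H)) = (u : H) := by
          rw [h1, hBF]
        have h3 : L (S u + (u : H)) = F ⟨L (u : H), hDF hLu⟩ := by
          rw [hFext ⟨L (u : H), hLu⟩, hLS u hu hLu, map_add]
        rw [h2, h3, hBF]
    exact fun y => congrFun heq y
  have hcomm' : ∀ y : H, B (L.symm y) = L.symm (B y) := by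
    intro y
    have := hcomm (L.symm y)
    rw [L.apply_symm_apply] at this
    have := congrArg L.symm this
    rw [L.symm_apply_apply] at this; exact this.symm
  have hmem : ∀ x : H, x ∈ DF ↔ L x ∈ DF := by
    intro x
    constructor
    · intro hx
      have : x ∈ Set.range B := by rw [hBrange]; exact hx
      obtain ⟨y, rfl⟩ := this
      rw [← hcomm]
      rw [← SetLike.mem_coe, ← hBrange]
      exact ⟨L y, rfl⟩
    · intro hx
      have : L x ∈ Set.range B := by rw [hBrange]; exact hx
      obtain ⟨y, hy⟩ := this
      have : x = B (L.symm y) := by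
        rw [hcomm', hy, L.symm_apply_apply]
      rw [this, ← SetLike.mem_coe, ← hBrange]
      exact ⟨L.symm y, rfl⟩
  refine ⟨hmem, ?_⟩
  intro x hx hLx
  set y := F ⟨x, hx⟩ with hy
  have hBy : B y = x := hBF ⟨x, hx⟩
  have hLx' : L x = B (L y) := by rw [← hBy, hcomm]
  obtain ⟨h, hFh⟩ := hFB (L y)
  have : (⟨L x, hLx⟩ : DF) = ⟨B (L y), h⟩ := Subtype.ext hLx'
  rw [this, hFh]
end
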